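/- Let a group G act by automorphisms on a median graph 𝒢. Suppose there exist a hyperplane H of 𝒢 and elements g, h ∈ G such that the three hyperplanes H, g·H, h·H are pairwise disjoint and g·H separates H from h·H, i.e., there are two distinct connected components A and B of the graph obtained from 𝒢 by deleting the edges of g·H such that every endpoint of an edge of H lies in A and every endpoint of an edge of h·H lies in B. Then G contains an element k all of whose orbits are unbounded: for every vertex x and every N ∈ ℕ there exists n ∈ ℕ with dist(x, kⁿ·x) > N. -/

import Mathlib

/-!
In a median graph every vertex is strictly closer to one endpoint of a given edge `ab` than to the
other, and this splitting is preserved across squares (otherwise two distinct vertices of a square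
would be medians of the same triple). So every edge of the hyperplane through `ab` joins the two
sides, and deleting a hyperplane leaves exactly two halfspaces.

Let `A`, `B` be the halfspaces of `g•H` containing the edges of `H`, resp. of `h•H`, let `E ⊇ B` be
a halfspace of `H` and `D ⊇ A` one of `h•H`. Translates of halfspaces are halfspaces, so `g•E` is
`A` or `B`, and if `g•E = A` then `(g h⁻¹)•D` is `A` or `B`. Accordingly `g`, `g h⁻¹` or `h` maps
a proper halfspace `C` of a hyperplane `X` into itself, with `X` disjoint from its translate. Then
the levels `kⁱ•C`, `i ∈ ℤ`, are nested and no edge leads from outside `kⁱ•C` into `kⁱ⁺¹•C`, so a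
walk from `x` to `kⁿ•x` needs at least `n - c(x)` steps.
-/

/-- `m` is a median of `x`, `y`, `z` in the graph `G`. -/
def IsMedianOf {V : Type*} (G : SimpleGraph V) (m x y z : V) : Prop :=
  G.dist x y = G.dist x m + G.dist m y ∧
  G.dist y z = G.dist y m + G.dist m z ∧
  G.dist x z = G.dist x m + G.dist m z

/-- A median graph: connected, and every triple of vertices has a unique median. -/
def MedianGraph {V : Type*} (G : SimpleGraph V) : Prop :=
  G.Connected ∧ ∀ x y z : V, ∃! m : V, IsMedianOf G m x y z

/-- Two edges are square-opposite: they are opposite sides of a 4-cycle. -/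
def SquareOpposite {V : Type*} (G : SimpleGraph V) (e f : Sym2 V) : Prop :=
  ∃ a b c d : V, a ≠ b ∧ a ≠ c ∧ a ≠ d ∧ b ≠ c ∧ b ≠ d ∧ c ≠ d ∧
    G.Adj a b ∧ G.Adj c d ∧ G.Adj a c ∧ G.Adj b d ∧ e = s(a, b) ∧ f = s(c, d)

/-- A hyperplane: an equivalence class of edges under the equivalence relation
generated by square-opposition. -/
def IsHyperplane {V : Type*} (G : SimpleGraph V) (H : Set (Sym2 V)) : Prop :=
  ∃ e ∈ G.edgeSet, H = {f | Relation.EqvGen (SquareOpposite G) e f}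

/-- Two distinct hyperplanes are transverse if some 4-cycle contains an edge of each. -/
def Transverse {V : Type*} (G : SimpleGraph V) (H₁ H₂ : Set (Sym2 V)) : Prop :=
  H₁ ≠ H₂ ∧ ∃ a b c d : V, a ≠ b ∧ a ≠ c ∧ a ≠ d ∧ b ≠ c ∧ b ≠ d ∧ c ≠ d ∧
    G.Adj a b ∧ G.Adj b c ∧ G.Adj c d ∧ G.Adj d a ∧
    (∃ e ∈ ({s(a, b), s(b, c), s(c, d), s(d, a)} : Set (Sym2 V)), e ∈ H₁) ∧
    (∃ e ∈ ({s(a, b), s(b, c), s(c, d), s(d, a)} : Set (Sym2 V)), e ∈ H₂)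

/-- Two hyperplanes are disjoint if they are distinct and not transverse. -/
def DisjointHyp {V : Type*} (G : SimpleGraph V) (H₁ H₂ : Set (Sym2 V)) : Prop :=
  H₁ ≠ H₂ ∧ ¬ Transverse G H₁ H₂

/-- The image `g · H` of a set of edges `H` under the action of a group element `g`. -/
def hypImage {V Γ : Type*} [SMul Γ V] (g : Γ) (H : Set (Sym2 V)) : Set (Sym2 V) :=
  Sym2.map (fun v => g • v) '' H

open SimpleGraph Pointwise

section

variable {V : Type*} {G : SimpleGraph V}

/-- The oriented Djoković–Winkler relation `e Θ ab`: one endpoint of `e` is closer to `a`,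
the other one closer to `b`. -/
def SimpleGraph.Theta (G : SimpleGraph V) (a b : V) (e : Sym2 V) : Prop :=
  ∃ x y, e = s(x, y) ∧ G.dist x b = G.dist x a + 1 ∧ G.dist y a = G.dist y b + 1

lemma SimpleGraph.Adj.dist_le_dist_add_one {x y : V} (hxy : G.Adj x y) (z : V) :
    G.dist x z ≤ G.dist y z + 1 := by
  have := hxy.reachable.dist_triangle_left z
  rw [dist_eq_one_iff_adj.mpr hxy] at this
  omega

lemma SquareOpposite.symm {e f : Sym2 V} (h : SquareOpposite G e f) : SquareOpposite G f e := by
  obtain ⟨a, b, c, d, hab, hac, had, hbc, hbd, hcd, hAab, hAcd, hAac, hAbd, rfl, rfl⟩ := h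
  exact ⟨c, d, a, b, hcd, hac.symm, hbc.symm, had.symm, hbd.symm, hab, hAcd, hAab, hAac.symm,
    hAbd.symm, rfl, rfl⟩

namespace MedianGraph

lemma eq_of_isMedianOf {m m' x y z : V} (hG : MedianGraph G) (hm : IsMedianOf G m x y z)
    (hm' : IsMedianOf G m' x y z) : m = m' :=
  (hG.2 x y z).unique hm hm'

lemma dist_eq_add_one_or {a b : V} (hG : MedianGraph G) (hab : G.Adj a b) (v : V) :
    G.dist v b = G.dist v a + 1 ∨ G.dist v a = G.dist v b + 1 := by
  obtain ⟨m, ⟨hva, hab', hvb⟩, -⟩ := hG.2 v a b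
  rw [dist_eq_one_iff_adj.mpr hab] at hab'
  -- the median of `v`, `a`, `b` is `a` or `b`
  rcases (by omega : G.dist a m = 0 ∨ G.dist m b = 0) with h | h
  · obtain rfl := hG.1.dist_eq_zero_iff.mp h
    rw [dist_self] at hva hab'
    omega
  · obtain rfl := hG.1.dist_eq_zero_iff.mp h
    rw [dist_self, dist_comm] at hab'
    omega

lemma dist_eq_two {u v w : V} (hG : MedianGraph G) (huv : G.Adj u v) (hvw : G.Adj v w)
    (huw : u ≠ w) : G.dist u w = 2 := by
  have h₁ : G.dist u v = 1 := dist_eq_one_iff_adj.mpr huv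
  have h₀ : G.dist u w ≠ 0 := fun h => huw (hG.1.dist_eq_zero_iff.mp h)
  rcases hG.dist_eq_add_one_or hvw u with h | h <;> omega

lemma dist_eq_add_one_of_square {a b u v u' v' : V} (hG : MedianGraph G) (hab : G.Adj a b)
    (huv : G.Adj u v) (hu'v' : G.Adj u' v') (huu' : G.Adj u u') (hvv' : G.Adj v v')
    (huv' : u ≠ v') (hvu' : v ≠ u')
    (hu : G.dist u b = G.dist u a + 1) (hv : G.dist v a = G.dist v b + 1) :
    G.dist u' b = G.dist u' a + 1 := by
  have hvb : G.dist v b = G.dist u a := by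
    have := huv.dist_le_dist_add_one b; have := huv.symm.dist_le_dist_add_one a; omega
  refine (hG.dist_eq_add_one_or hab u').resolve_right fun hu' => ?_
  have hu'b : G.dist u' b = G.dist u a := by
    have := huu'.dist_le_dist_add_one b; have := huu'.symm.dist_le_dist_add_one a; omega
  have d₁ : G.dist u v' = 2 := hG.dist_eq_two huv hvv' huv'
  have d₂ : G.dist u' v = 2 := hG.dist_eq_two huu'.symm huv hvu'.symm
  have adj : ∀ {x y : V}, G.Adj x y → G.dist x y = 1 ∧ G.dist y x = 1 := fun h =>
    ⟨dist_eq_one_iff_adj.mpr h, dist_eq_one_iff_adj.mpr h.symm⟩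
  have := adj huu'; have := adj huv; have := adj hu'v'; have := adj hvv'
  have : G.dist a v' = G.dist v' a := dist_comm
  have : G.dist a v = G.dist v a := dist_comm
  have hv'b := hG.dist_eq_add_one_or hab v'
  have := hvv'.symm.dist_le_dist_add_one b
  -- `d(v', a) = d(v, a) ± 1`; either way two distinct vertices of the square are medians of
  -- the same triple
  rcases hG.dist_eq_add_one_or hvv' a with hv'a | hv'a
  · exact hvu' (hG.eq_of_isMedianOf (x := u) (y := v') (z := b)
      ⟨by omega, by omega, by omega⟩ ⟨by omega, by omega, by omega⟩)
  · exact huv' (hG.eq_of_isMedianOf (x := u') (y := v) (z := a)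
      ⟨by omega, by omega, by omega⟩ ⟨by omega, by omega, by omega⟩)

lemma theta_of_squareOpposite {a b : V} {e f : Sym2 V} (hG : MedianGraph G) (hab : G.Adj a b)
    (hef : SquareOpposite G e f) (he : G.Theta a b e) : G.Theta a b f := by
  obtain ⟨p, q, r, s, hpq, -, hps, hqr, -, -, hApq, hArs, hApr, hAqs, rfl, rfl⟩ := hef
  obtain ⟨x, y, hxy, hx, hy⟩ := he
  rcases Sym2.eq_iff.mp hxy with ⟨rfl, rfl⟩ | ⟨rfl, rfl⟩
  · exact ⟨r, s, rfl,
      hG.dist_eq_add_one_of_square hab hApq hArs hApr hAqs hps hqr hx hy,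
      hG.dist_eq_add_one_of_square hab.symm hApq.symm hArs.symm hAqs hApr hqr hps hy hx⟩
  · exact ⟨s, r, Sym2.eq_swap,
      hG.dist_eq_add_one_of_square hab hApq.symm hArs.symm hAqs hApr hqr hps hx hy,
      hG.dist_eq_add_one_of_square hab.symm hApq hArs hApr hAqs hps hqr hy hx⟩

lemma theta_of_eqvGen {a b : V} {e : Sym2 V} (hG : MedianGraph G) (hab : G.Adj a b)
    (he : Relation.EqvGen (SquareOpposite G) s(a, b) e) : G.Theta a b e := by
  have key : ∀ e f, Relation.EqvGen (SquareOpposite G) e f → (G.Theta a b e ↔ G.Theta a b f) := by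
    intro e f h
    induction h with
    | rel e f h =>
      exact ⟨hG.theta_of_squareOpposite hab h, hG.theta_of_squareOpposite hab h.symm⟩
    | refl => rfl
    | symm _ _ _ ih => exact ih.symm
    | trans _ _ _ _ _ ih₁ ih₂ => exact ih₁.trans ih₂
  refine (key _ _ he).mp ⟨a, b, rfl, ?_, ?_⟩ <;>
    simp [dist_eq_one_iff_adj.mpr hab, dist_eq_one_iff_adj.mpr hab.symm]

lemma reachable_deleteEdges_of_dist_eq_add_one {a b v : V} (hG : MedianGraph G)
    (hab : G.Adj a b) (hv : G.dist v b = G.dist v a + 1) :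
    (G.deleteEdges {e | Relation.EqvGen (SquareOpposite G) s(a, b) e}).Reachable v a := by
  induction hn : G.dist v a generalizing v with
  | zero => rw [hG.1.dist_eq_zero_iff.mp hn]
  | succ n ih =>
    obtain ⟨p, hp⟩ := hG.1.exists_walk_length_eq_dist v a
    cases p with
    | nil => simp at hn
    | @cons _ w _ hvw p =>
      rw [Walk.length_cons] at hp
      have hwa : G.dist w a = n := by
        have := dist_le p; have := hvw.dist_le_dist_add_one a; omega
      have hw : G.dist w b = G.dist w a + 1 := by
        have := hvw.dist_le_dist_add_one b
        rcases hG.dist_eq_add_one_or hab w with h | h <;> omega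
      -- both endpoints of `vw` are closer to `a`, so `vw` is not parallel to `ab`
      have hvw' : s(v, w) ∉ {e | Relation.EqvGen (SquareOpposite G) s(a, b) e} := fun h => by
        obtain ⟨x, y, hxy, hx, hy⟩ := hG.theta_of_eqvGen hab h
        rcases Sym2.eq_iff.mp hxy with ⟨rfl, rfl⟩ | ⟨rfl, rfl⟩ <;> omega
      exact (Adj.reachable (deleteEdges_adj.mpr ⟨hvw, hvw'⟩)).trans (ih hw hwa)

lemma mem_supp_or_mem_supp {X : Set (Sym2 V)} (hG : MedianGraph G) (hX : IsHyperplane G X)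
    {A B : (G.deleteEdges X).ConnectedComponent} (hAB : A ≠ B) (v : V) :
    v ∈ A.supp ∨ v ∈ B.supp := by
  obtain ⟨e, he, hXe⟩ := hX
  induction e using Sym2.ind with | _ a b => ?_
  have hab : G.Adj a b := he
  have hC : ∀ C : (G.deleteEdges X).ConnectedComponent,
      C = connectedComponentMk _ a ∨ C = connectedComponentMk _ b := by
    subst hXe
    intro C
    induction C using ConnectedComponent.ind with | _ w => ?_
    rcases hG.dist_eq_add_one_or hab w with h | h
    · exact .inl (ConnectedComponent.sound (hG.reachable_deleteEdges_of_dist_eq_add_one hab h))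
    · refine .inr (ConnectedComponent.sound ?_)
      simpa only [Sym2.eq_swap] using hG.reachable_deleteEdges_of_dist_eq_add_one hab.symm h
  simp only [ConnectedComponent.mem_supp_iff]
  rcases hC A with rfl | rfl <;> rcases hC B with rfl | rfl <;>
    rcases hC (connectedComponentMk _ v) with h | h <;> simp_all

end MedianGraph

section Action

variable {Γ : Type*} [Group Γ] [MulAction Γ V]

lemma hypImage_hypImage (γ δ : Γ) (X : Set (Sym2 V)) :
    hypImage γ (hypImage δ X) = hypImage (γ * δ) X := by
  simp only [hypImage, Set.image_image, Sym2.map_map, Function.comp_def, mul_smul]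

lemma Sym2.map_inv_smul_map_smul (γ : Γ) (e : Sym2 V) :
    Sym2.map (γ⁻¹ • ·) (Sym2.map (γ • ·) e) = e := by
  simp [Sym2.map_map]

variable (hact : ∀ (γ : Γ) (u v : V), G.Adj u v ↔ G.Adj (γ • u) (γ • v))
include hact

lemma SquareOpposite.map_smul (γ : Γ) {e f : Sym2 V} (h : SquareOpposite G e f) :
    SquareOpposite G (e.map (γ • ·)) (f.map (γ • ·)) := by
  obtain ⟨a, b, c, d, hab, hac, had, hbc, hbd, hcd, hAab, hAcd, hAac, hAbd, rfl, rfl⟩ := h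
  have : Function.Injective (γ • · : V → V) := MulAction.injective γ
  exact ⟨γ • a, γ • b, γ • c, γ • d, this.ne hab, this.ne hac, this.ne had, this.ne hbc,
    this.ne hbd, this.ne hcd, (hact γ a b).mp hAab, (hact γ c d).mp hAcd, (hact γ a c).mp hAac,
    (hact γ b d).mp hAbd, rfl, rfl⟩

lemma eqvGen_squareOpposite_map_smul (γ : Γ) {e f : Sym2 V}
    (h : Relation.EqvGen (SquareOpposite G) e f) :
    Relation.EqvGen (SquareOpposite G) (e.map (γ • ·)) (f.map (γ • ·)) := by
  induction h with
  | rel e f h => exact .rel _ _ (h.map_smul hact γ)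
  | refl => exact .refl _
  | symm _ _ _ ih => exact .symm _ _ ih
  | trans _ _ _ _ _ ih₁ ih₂ => exact .trans _ _ _ ih₁ ih₂

lemma IsHyperplane.hypImage {X : Set (Sym2 V)} (hX : IsHyperplane G X) (γ : Γ) :
    IsHyperplane G (hypImage γ X) := by
  obtain ⟨e, he, rfl⟩ := hX
  refine ⟨e.map (γ • ·), ?_, Set.ext fun f => ⟨?_, fun hf => ?_⟩⟩
  · induction e using Sym2.ind with | _ a b => exact (hact γ a b).mp he
  · rintro ⟨f, hf, rfl⟩
    exact eqvGen_squareOpposite_map_smul hact γ hf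
  · refine ⟨f.map (γ⁻¹ • ·), ?_, by simpa using Sym2.map_inv_smul_map_smul γ⁻¹ f⟩
    simpa [Sym2.map_inv_smul_map_smul] using eqvGen_squareOpposite_map_smul hact γ⁻¹ hf

lemma SimpleGraph.Reachable.smul_deleteEdges (γ : Γ) {X : Set (Sym2 V)} {u v : V}
    (h : (G.deleteEdges X).Reachable u v) :
    (G.deleteEdges (hypImage γ X)).Reachable (γ • u) (γ • v) := by
  refine h.map ⟨(γ • ·), fun {x y} hxy => ?_⟩
  rw [deleteEdges_adj] at hxy ⊢
  refine ⟨(hact γ x y).mp hxy.1, fun hmem => hxy.2 ?_⟩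
  rwa [_root_.hypImage, ← Sym2.map_mk,
    (Sym2.map.injective (MulAction.injective γ)).mem_set_image] at hmem

lemma SimpleGraph.ConnectedComponent.smul_supp_subset {γ : Γ} {X Y : Set (Sym2 V)}
    (hXY : hypImage γ X = Y) {C : (G.deleteEdges X).ConnectedComponent}
    {C' : (G.deleteEdges Y).ConnectedComponent} {v : V} (hv : v ∈ C.supp)
    (hv' : γ • v ∈ C'.supp) : γ • C.supp ⊆ C'.supp := by
  subst hXY
  rintro _ ⟨x, hx, rfl⟩
  rw [ConnectedComponent.mem_supp_iff] at hv' ⊢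
  rw [← hv']
  exact ConnectedComponent.sound ((C.reachable_of_mem_supp hx hv).smul_deleteEdges hact γ)

end Action

lemma IsHyperplane.disjoint_of_ne {X Y : Set (Sym2 V)} (hX : IsHyperplane G X)
    (hY : IsHyperplane G Y) (hXY : X ≠ Y) : Disjoint X Y := by
  obtain ⟨e, -, rfl⟩ := hX
  obtain ⟨f, -, rfl⟩ := hY
  have R := Relation.EqvGen.is_equivalence (SquareOpposite G)
  refine Set.disjoint_left.mpr fun c hec hfc => hXY (Set.ext fun d => ?_)
  exact ⟨fun hed => R.trans hfc (R.trans (R.symm hec) hed),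
    fun hfd => R.trans hec (R.trans (R.symm hfc) hfd)⟩

namespace SimpleGraph.ConnectedComponent

variable {X Y : Set (Sym2 V)}

lemma mem_of_adj_of_mem_supp_of_notMem_supp (C : (G.deleteEdges X).ConnectedComponent)
    {u v : V} (huv : G.Adj u v) (hu : u ∈ C.supp) (hv : v ∉ C.supp) : s(u, v) ∈ X :=
  by_contra fun h => hv (C.mem_supp_of_adj_mem_supp hu (deleteEdges_adj.mpr ⟨huv, h⟩))

lemma supp_subset_supp_of_forall_notMem (C : (G.deleteEdges X).ConnectedComponent)
    (hY : ∀ e ∈ Y, ∀ w ∈ C.supp, w ∉ e) {v : V} (hv : v ∈ C.supp) :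
    C.supp ⊆ ((G.deleteEdges Y).connectedComponentMk v).supp := by
  intro u hu
  obtain ⟨p⟩ := C.reachable_of_mem_supp hu hv
  refine ConnectedComponent.sound ?_
  clear hv
  induction p with
  | nil => rfl
  | @cons x y _ h p ih =>
    have hxy : s(x, y) ∉ Y := fun he => hY _ he _ hu (Sym2.mem_mk_left _ _)
    exact (Adj.reachable (deleteEdges_adj.mpr ⟨(deleteEdges_adj.mp h).1, hxy⟩)).trans
      (ih (C.mem_supp_of_adj_mem_supp hu h))

end SimpleGraph.ConnectedComponent

section Translation

variable {Γ : Type*} [Group Γ] [MulAction Γ V] {k : Γ} {P : Set V}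
  (hact : ∀ (γ : Γ) (u v : V), G.Adj u v ↔ G.Adj (γ • u) (γ • v))
include hact

lemma notMem_smul_of_adj {X : Set (Sym2 V)}
    (hP : ∀ u v, G.Adj u v → u ∈ P → v ∉ P → s(u, v) ∈ X) (hkP : k • P ⊆ P)
    (hX : Disjoint X (hypImage k X)) {u v : V} (huv : G.Adj u v) (hu : u ∉ P) : v ∉ k • P := by
  intro hv
  have hvu : s(v, u) ∈ X := hP v u huv.symm (hkP hv) hu
  rw [Set.mem_smul_set_iff_inv_smul_mem] at hv
  have hu' : k⁻¹ • u ∉ P := fun h => hu (hkP (Set.mem_smul_set_iff_inv_smul_mem.mpr h))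
  have hvu' := hP _ _ ((hact k⁻¹ v u).mp huv.symm) hv hu'
  exact Set.disjoint_left.mp hX hvu ⟨_, hvu', by simp⟩

section Levels

variable (hstep : ∀ u v, G.Adj u v → u ∉ P → v ∉ k • P)
include hstep

lemma notMem_zpow_smul_of_adj (i : ℤ) {u v : V} (huv : G.Adj u v) (hu : u ∉ k ^ i • P) :
    v ∉ k ^ (i + 1) • P := by
  rw [zpow_add_one, mul_smul, Set.mem_smul_set_iff_inv_smul_mem]
  rw [Set.mem_smul_set_iff_inv_smul_mem] at hu
  exact hstep _ _ ((hact _ u v).mp huv) hu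

lemma sub_le_length_of_notMem_of_mem (hkP : k • P ⊆ P) {x y : V} (p : G.Walk x y) {i j : ℤ}
    (hx : x ∉ k ^ i • P) (hy : y ∈ k ^ j • P) : j - i ≤ p.length := by
  induction p generalizing i with
  | nil =>
    have anti : Antitone (fun i : ℤ => k ^ i • P) := antitone_int_of_succ_le fun i => by
      rw [zpow_add_one, mul_smul]
      exact Set.smul_set_mono hkP
    have : ¬ i ≤ j := fun hij => hx (anti hij hy)
    omega
  | cons h p ih =>
    have := ih (notMem_zpow_smul_of_adj hact hstep i h hx) hy
    rw [Walk.length_cons]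
    omega

lemma sub_le_dist_of_notMem_of_mem (hconn : G.Connected) (hkP : k • P ⊆ P) {x y : V} {i j : ℤ}
    (hx : x ∉ k ^ i • P) (hy : y ∈ k ^ j • P) : j - i ≤ G.dist x y := by
  obtain ⟨p, hp⟩ := hconn.exists_walk_length_eq_dist x y
  exact hp ▸ sub_le_length_of_notMem_of_mem hact hstep hkP p hx hy

theorem exists_lt_dist_pow_smul (hconn : G.Connected) (hkP : k • P ⊆ P) {p q : V}
    (hp : p ∈ P) (hq : q ∉ P) (x : V) (N : ℕ) : ∃ n : ℕ, N < G.dist x (k ^ n • x) := by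
  have hp' : p ∈ k ^ (0 : ℤ) • P := by simpa using hp
  have hq' : q ∉ k ^ (0 : ℤ) • P := by simpa using hq
  have hi : x ∈ k ^ (-(G.dist x p : ℤ) - 1) • P := by
    by_contra h
    have := sub_le_dist_of_notMem_of_mem hact hstep hconn hkP h hp'
    omega
  have hj : x ∉ k ^ ((G.dist q x : ℤ) + 1) • P := fun h => by
    have := sub_le_dist_of_notMem_of_mem hact hstep hconn hkP hq' h
    omega
  set n := N + G.dist x p + G.dist q x + 3
  have hn : k ^ n • x ∈ k ^ ((n : ℤ) + (-(G.dist x p : ℤ) - 1)) • P := by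
    rw [zpow_add, mul_smul, zpow_natCast]
    exact Set.smul_mem_smul_set hi
  have := sub_le_dist_of_notMem_of_mem hact hstep hconn hkP hj hn
  exact ⟨n, by omega⟩

end Levels

theorem exists_lt_dist_pow_smul_of_smul_supp_subset (hconn : G.Connected) {X : Set (Sym2 V)}
    (hX : IsHyperplane G X) (hkX : X ≠ hypImage k X) (C : (G.deleteEdges X).ConnectedComponent)
    {S : Set V} (hkC : k • C.supp ⊆ S) (hSC : S ⊆ C.supp) {q : V} (hq : q ∉ S) (x : V) (N : ℕ) :
    ∃ n : ℕ, N < G.dist x (k ^ n • x) := by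
  obtain ⟨p, hp⟩ := C.nonempty_supp
  have hkC' := hkC.trans hSC
  have hq' : k⁻¹ • q ∉ C.supp := fun h => hq (hkC (Set.mem_smul_set_iff_inv_smul_mem.mpr h))
  have hdisj : Disjoint X (hypImage k X) := hX.disjoint_of_ne (hX.hypImage hact k) hkX
  refine exists_lt_dist_pow_smul hact (fun _ _ huv hu => ?_) hconn hkC' hp hq' x N
  exact notMem_smul_of_adj hact (fun _ _ => C.mem_of_adj_of_mem_supp_of_notMem_supp) hkC' hdisj
    huv hu

end Translation

end

/-- If a group acts on a median graph and some hyperplane `H` together with two of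
its translates `g·H`, `h·H` are pairwise disjoint, with `g·H` separating `H` from
`h·H`, then the group contains an element all of whose orbits are unbounded. -/
theorem exists_loxodromic_of_three_separated_translates {V : Type*}
    (𝒢 : SimpleGraph V) (hG : MedianGraph 𝒢)
    {Γ : Type*} [Group Γ] [MulAction Γ V]
    (hact : ∀ (g : Γ) (u v : V), 𝒢.Adj u v ↔ 𝒢.Adj (g • u) (g • v))
    (H : Set (Sym2 V)) (hH : IsHyperplane 𝒢 H) (g h : Γ)
    (hd1 : DisjointHyp 𝒢 H (hypImage g H))
    (hd2 : DisjointHyp 𝒢 H (hypImage h H))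
    (hd3 : DisjointHyp 𝒢 (hypImage g H) (hypImage h H))
    (hsep : ∃ A B : (𝒢.deleteEdges (hypImage g H)).ConnectedComponent, A ≠ B ∧
      (∀ v : V, (∃ e ∈ H, v ∈ e) → v ∈ A.supp) ∧
      (∀ v : V, (∃ e ∈ hypImage h H, v ∈ e) → v ∈ B.supp)) :
    ∃ k : Γ, ∀ x : V, ∀ N : ℕ, ∃ n : ℕ, N < 𝒢.dist x (k ^ n • x) := by
  obtain ⟨A, B, hAB, hA, hB⟩ := hsep
  have hcover := hG.mem_supp_or_mem_supp (hH.hypImage hact g) hAB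
  have hdisj : Disjoint A.supp B.supp := pairwise_disjoint_supp_connectedComponent _ hAB
  obtain ⟨a, ha⟩ := A.nonempty_supp
  obtain ⟨b, hb⟩ := B.nonempty_supp
  set E := (𝒢.deleteEdges H).connectedComponentMk b
  set D := (𝒢.deleteEdges (hypImage h H)).connectedComponentMk a
  have hBE : B.supp ⊆ E.supp := B.supp_subset_supp_of_forall_notMem
    (fun e he w hw hwe => hdisj.notMem_of_mem_left (hA w ⟨e, he, hwe⟩) hw) hb
  have hAD : A.supp ⊆ D.supp := A.supp_subset_supp_of_forall_notMem
    (fun e he w hw hwe => hdisj.notMem_of_mem_left hw (hB w ⟨e, he, hwe⟩)) ha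
  have hDW : hypImage (g * h⁻¹) (hypImage h H) = hypImage g H := by
    rw [hypImage_hypImage, inv_mul_cancel_right]
  have of_smul_E : ∀ γ : Γ, H ≠ hypImage γ H → γ • E.supp ⊆ B.supp →
      ∃ k : Γ, ∀ x : V, ∀ N : ℕ, ∃ n : ℕ, N < 𝒢.dist x (k ^ n • x) := fun γ hγ hγE =>
    ⟨γ, exists_lt_dist_pow_smul_of_smul_supp_subset hact hG.1 hH hγ E hγE hBE
      (hdisj.notMem_of_mem_left ha)⟩
  rcases hcover (g • b) with hgb | hgb
  · have hgE : g • E.supp ⊆ A.supp := ConnectedComponent.smul_supp_subset hact rfl rfl hgb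
    rcases hcover ((g * h⁻¹) • a) with hka | hka
    · refine ⟨g * h⁻¹, exists_lt_dist_pow_smul_of_smul_supp_subset hact hG.1 (hH.hypImage hact h)
        (by rw [hDW]; exact hd3.1.symm) D (ConnectedComponent.smul_supp_subset hact hDW rfl hka)
        hAD (hdisj.notMem_of_mem_right hb)⟩
    · refine of_smul_E h hd2.1 ?_
      rintro _ ⟨x, hx, rfl⟩
      -- `h • x ∈ A ⊆ D` would put `g • x = (g * h⁻¹) • h • x` into `B`
      refine (hcover (h • x)).resolve_left fun hhx => hdisj.notMem_of_mem_left
        (hgE (Set.smul_mem_smul_set hx)) ?_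
      simpa [smul_smul] using ConnectedComponent.smul_supp_subset hact hDW rfl hka
        (Set.smul_mem_smul_set (hAD hhx))
  · exact of_smul_E g hd1.1 (ConnectedComponent.smul_supp_subset hact rfl rfl hgb)
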